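/- arXiv:2003.01783 — 3 statements merged into one kernel-verified Lean document; each statement's English description precedes it below -/
import Mathlib

section
/- (Monotonicity bound for the modified aggregator.) Let F(c,m,v) = f(c,v) - (1-ζ^{1-γ})mv with f the Epstein-Zin aggregator (δ>0, ψ>1, γ>1/ψ, γ≠1, θ=(1-γ)/(1-1/ψ), ζ∈(0,1]), fix k∈ℝ with Λ=δθ+(1-θ)k, and suppose W ≤ V ≤ δ^θ·(k+(ψ-1)(1-ζ^{1-γ})/(1-γ)·m)^{-θ}·c^{1-γ}/(1-γ), where all quantities satisfy (1-γ)W>0, (1-γ)V>0 and k+(ψ-1)(1-ζ^{1-γ})/(1-γ)·m > 0. Then F(c,m,V) - F(c,m,W) ≤ -(Λ + γ(ψ-1)(1-ζ^{1-γ})/(1-γ)·m)·(V-W). -/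
open Real

private lemma bernoulli_aux {t p : ℝ} (ht : 0 < t) (hp : p ≤ 0 ∨ 1 ≤ p) :
    1 + p * (t - 1) ≤ t ^ p := by
  rcases hp with hp | hp
  · have h1 : Real.log t ≤ t - 1 := Real.log_le_sub_one_of_pos ht
    have h2 : p * (t - 1) ≤ p * Real.log t := mul_le_mul_of_nonpos_left h1 hp
    have h3 : Real.log t * p + 1 ≤ Real.exp (Real.log t * p) := Real.add_one_le_exp _
    rw [Real.rpow_def_of_pos ht]
    nlinarith
  · have := one_add_mul_self_le_rpow_one_add (s := t - 1) (by linarith) hp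
    simpa using this

private lemma tangent_le {x y p : ℝ} (hx : 0 < x) (hy : 0 < y) (hp : p ≤ 0 ∨ 1 ≤ p) :
    y ^ p + p * y ^ (p - 1) * (x - y) ≤ x ^ p := by
  have ht : 0 < x / y := div_pos hx hy
  have hyp : 0 < y ^ p := Real.rpow_pos_of_pos hy p
  have key := mul_le_mul_of_nonneg_left (bernoulli_aux ht hp) hyp.le
  rw [Real.div_rpow hx.le hy.le] at key
  have h1 : y ^ p * (x ^ p / y ^ p) = x ^ p := by field_simp
  have h2 : y ^ (p - 1) = y ^ p / y := by rw [Real.rpow_sub hy, Real.rpow_one]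
  rw [h1] at key
  calc y ^ p + p * y ^ (p - 1) * (x - y) = y ^ p * (1 + p * (x / y - 1)) := by
        rw [h2]; field_simp
    _ ≤ x ^ p := key

set_option maxHeartbeats 1600000 in
/-- Monotonicity bound for the modified Epstein-Zin aggregator (Lemma A.1). -/
theorem epstein_zin_monotonicity_bound
    (δ ψ γ ζ θ k Λ : ℝ) (hδ : 0 < δ) (hψ : 1 < ψ) (hγψ : 1 / ψ < γ) (hγ0 : 0 < γ)
    (hγ : γ ≠ 1) (hζ : ζ ∈ Set.Ioc (0 : ℝ) 1)
    (hθ : θ = (1 - γ) / (1 - 1 / ψ)) (hΛ : Λ = δ * θ + (1 - θ) * k)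
    (f : ℝ → ℝ → ℝ)
    (hf : ∀ c v, f c v = δ * c ^ (1 - 1 / ψ) / (1 - 1 / ψ) * ((1 - γ) * v) ^ (1 - 1 / θ)
        - δ * θ * v)
    (F : ℝ → ℝ → ℝ → ℝ)
    (hF : ∀ c m v, F c m v = f c v - (1 - ζ ^ (1 - γ)) * m * v)
    (c m V W : ℝ) (hc : 0 < c) (hm : 0 ≤ m)
    (hW : 0 < (1 - γ) * W) (hV : 0 < (1 - γ) * V)
    (hpos : 0 < k + (ψ - 1) * (1 - ζ ^ (1 - γ)) / (1 - γ) * m)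
    (hWV : W ≤ V)
    (hVbound : V ≤ δ ^ θ * (k + (ψ - 1) * (1 - ζ ^ (1 - γ)) / (1 - γ) * m) ^ (-θ)
        * c ^ (1 - γ) / (1 - γ)) :
    F c m V - F c m W ≤ -(Λ + γ * (ψ - 1) * (1 - ζ ^ (1 - γ)) / (1 - γ) * m) * (V - W) := by
  have hψ0 : (0:ℝ) < ψ := by linarith
  have hq : 0 < 1 - 1/ψ := by
    have h1 : 1/ψ < 1 := by rw [div_lt_one hψ0]; exact hψ
    linarith
  have hγ1 : (1:ℝ) - γ ≠ 0 := sub_ne_zero.2 (Ne.symm hγ)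
  have hψne : ψ ≠ 0 := ne_of_gt hψ0
  have hψ1ne : ψ - 1 ≠ 0 := sub_ne_zero.2 (ne_of_gt hψ)
  have hθψ : 1 - γ = θ * (1 - 1/ψ) := by rw [hθ]; field_simp
  have hθ0 : θ ≠ 0 := by rw [hθ]; exact div_ne_zero hγ1 (ne_of_gt hq)
  have hθlt : θ < 1 := by
    rw [hθ, div_lt_one hq]
    linarith
  set μ := 1 - ζ ^ (1 - γ) with hμ
  set K := k + (ψ - 1) * μ / (1 - γ) * m with hKdef
  set p := 1 - 1/θ with hpdef
  set A := δ * c ^ (1 - 1/ψ) / (1 - 1/ψ) with hAdef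
  have hA : 0 < A := by
    apply div_pos _ hq
    exact mul_pos hδ (Real.rpow_pos_of_pos hc _)
  set uB := δ ^ θ * K ^ (-θ) * c ^ (1 - γ) with huBdef
  have huB : 0 < uB := by
    apply mul_pos (mul_pos (Real.rpow_pos_of_pos hδ _) (Real.rpow_pos_of_pos hpos _))
      (Real.rpow_pos_of_pos hc _)
  have hp : p ≤ 0 ∨ 1 ≤ p := by
    rcases lt_or_gt_of_ne hθ0 with h | h
    · right
      have : 1/θ < 0 := div_neg_of_pos_of_neg one_pos h
      rw [hpdef]; linarith
    · left
      have hinv : θ * (1/θ) = 1 := by field_simp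
      rw [hpdef]
      nlinarith
  -- comparison of the derivative factor
  have hmono : uB ^ (p - 1) ≤ ((1-γ)*V) ^ (p - 1) := by
    have hp1 : p - 1 = -(1/θ) := by rw [hpdef]; ring
    rcases lt_or_gt_of_ne hθ0 with h | h
    · -- θ < 0, so 1-γ < 0, and exponent -(1/θ) > 0
      have h1γ : 1 - γ < 0 := by nlinarith
      have hle : uB ≤ (1-γ)*V := by
        have h2 := mul_le_mul_of_nonpos_left hVbound h1γ.le
        have h3 : (1-γ) * (uB / (1-γ)) = uB := by field_simp
        rw [h3] at h2; exact h2
      have hexp : 0 ≤ p - 1 := by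
        rw [hp1]
        have : 1/θ < 0 := div_neg_of_pos_of_neg one_pos h
        linarith
      exact Real.rpow_le_rpow huB.le hle hexp
    · -- θ > 0, so 1-γ > 0, and exponent -(1/θ) < 0
      have h1γ : 0 < 1 - γ := by nlinarith
      have hle : (1-γ)*V ≤ uB := by
        have h2 := mul_le_mul_of_nonneg_left hVbound h1γ.le
        have h3 : (1-γ) * (uB / (1-γ)) = uB := by field_simp
        rw [h3] at h2; exact h2
      have hexp : p - 1 ≤ 0 := by
        rw [hp1]
        have : 0 < 1/θ := by positivity
        linarith
      exact Real.rpow_le_rpow_of_nonpos hV hle hexp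
  have hApq : A * p * (1-γ) ≤ 0 := by
    have h1 : p * (1-γ) = (θ - 1) * (1 - 1/ψ) := by
      rw [hpdef, hθψ]; field_simp
    have h2 : p * (1-γ) ≤ 0 := by rw [h1]; nlinarith
    nlinarith
  -- value of uB ^ (p-1)
  have huBp : uB ^ (p - 1) = δ⁻¹ * K * c ^ (-(1 - 1/ψ)) := by
    have hp1 : p - 1 = -(1/θ) := by rw [hpdef]; ring
    rw [hp1, huBdef, Real.mul_rpow (by positivity) (by positivity),
      Real.mul_rpow (by positivity) (by positivity),
      ← Real.rpow_mul hδ.le, ← Real.rpow_mul hpos.le, ← Real.rpow_mul hc.le]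
    have e1 : θ * -(1/θ) = -1 := by field_simp
    have e2 : -θ * -(1/θ) = 1 := by field_simp
    have e3 : (1 - γ) * -(1/θ) = -(1 - 1/ψ) := by rw [hθψ]; field_simp
    rw [e1, e2, e3, Real.rpow_neg_one, Real.rpow_one]
  have hcoef : A * p * (1-γ) * (δ⁻¹ * K * c ^ (-(1 - 1/ψ))) = (θ - 1) * K := by
    have hcc : c ^ (1 - 1/ψ) * c ^ (-(1 - 1/ψ)) = 1 := by
      rw [← Real.rpow_add hc]; simp
    have h5 : (1 - 1/θ) * (1-γ) / (1 - 1/ψ) = θ - 1 := by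
      rw [hθψ]; field_simp
    calc A * p * (1-γ) * (δ⁻¹ * K * c ^ (-(1 - 1/ψ)))
        = (δ * δ⁻¹) * (c ^ (1 - 1/ψ) * c ^ (-(1 - 1/ψ))) * ((1 - 1/θ) * (1-γ) / (1 - 1/ψ)) * K := by
          rw [hAdef, hpdef]; ring
      _ = (θ - 1) * K := by rw [hcc, mul_inv_cancel₀ hδ.ne', h5]; ring
  have h6 : (θ - 1) * (ψ - 1) / (1 - γ) - 1 = -(γ * (ψ - 1) / (1 - γ)) := by
    rw [hθ]; field_simp; ring
  have htar : (θ - 1) * K - δ * θ - μ * m = -(Λ + γ * (ψ - 1) * μ / (1 - γ) * m) := by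
    rw [hKdef, hΛ]; linear_combination (μ * m) * h6
  -- main chain
  have hkey := tangent_le hW hV hp
  calc F c m V - F c m W
      = A * (((1-γ)*V)^p - ((1-γ)*W)^p) - (δ*θ + μ*m) * (V - W) := by
        rw [hF, hF, hf, hf, hpdef, hAdef]; ring
    _ ≤ A * (p * ((1-γ)*V)^(p-1) * ((1-γ)*V - (1-γ)*W)) - (δ*θ + μ*m) * (V - W) := by
        have := mul_le_mul_of_nonneg_left (by linarith [hkey] :
          ((1-γ)*V)^p - ((1-γ)*W)^p ≤ p * ((1-γ)*V)^(p-1) * ((1-γ)*V - (1-γ)*W)) hA.le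
        linarith
    _ = (A * p * (1-γ) * ((1-γ)*V)^(p-1) - δ*θ - μ*m) * (V - W) := by ring
    _ ≤ (A * p * (1-γ) * uB^(p-1) - δ*θ - μ*m) * (V - W) := by
        apply mul_le_mul_of_nonneg_right _ (by linarith)
        have := mul_le_mul_of_nonpos_left hmono hApq
        linarith
    _ = ((θ - 1) * K - δ*θ - μ*m) * (V - W) := by rw [huBp, hcoef]
    _ = -(Λ + γ * (ψ - 1) * μ / (1 - γ) * m) * (V - W) := by rw [htar]
end

section
/- Suppose β=0 (no aging) and no healthcare, with parameters δ>0, ψ>1, γ>1/ψ, γ≠1, ζ∈(0,1], r,μ,σ with σ>0, and fix m≥0 with c̃₀(m) := ψδ + (1-ψ)((ζ^{1-γ}-1)m/(1-γ) + r + μ²/(2γσ²)) > 0. Then the function w(x) := δ^θ·x^{1-γ}/(1-γ)·c̃₀(m)^{-θ/ψ}, θ=(1-γ)/(1-1/ψ), solves the stationary HJB equation: sup_{c≥0}{f(c,w(x)) - c·w'(x)} + sup_{π∈ℝ}{μπx·w'(x) + σ²π²x²w''(x)/2} + rx·w'(x) + (ζ^{1-γ}-1)m·w(x) = 0 for all x>0,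 with maximizers c̄(x) = x·c̃₀(m) and π̄ = μ/(γσ²). -/
/-!
Everything is homogeneous in wealth. With `S = (1-γ) w(x)`, the power form of `w` gives
`x w' = S` and `x² w'' = -γ S`, and the constant in `w` is such that
`S = (δ (x c̃₀)^{1-1/ψ} / c̃₀)^θ`, i.e. `δ (x c̃₀)^{1-1/ψ} S^{1-1/θ} = c̃₀ S`. This is the
first-order condition of the consumption problem at `c = x c̃₀`, a maximum by concavity of
`c ↦ c^{1-1/ψ}`. The portfolio problem is a concave quadratic with vertex `μ/(γσ²)`. At the
maximisers every term of the HJB equation is a multiple of `S`, and the definition of `c̃₀` is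
exactly the vanishing of the total coefficient.
-/

open Real

lemma Real.rpow_le_rpow_add_mul_sub {a b p : ℝ} (ha : 0 ≤ a) (hb : 0 < b) (hp0 : 0 ≤ p)
    (hp1 : p ≤ 1) : a ^ p ≤ b ^ p + p * b ^ (p - 1) * (a - b) := by
  have amgm := geom_mean_le_arith_mean2_weighted hp0 (sub_nonneg.2 hp1) ha hb.le (by ring)
  have hb' : b ^ (p - 1) * b ^ (1 - p) = 1 := by
    rw [← rpow_add hb, sub_add_sub_cancel', sub_self, rpow_zero]
  have hbp : b ^ (p - 1) * b = b ^ p := by rw [rpow_sub_one hb.ne', div_mul_cancel₀ _ hb.ne']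
  calc a ^ p = b ^ (p - 1) * (a ^ p * b ^ (1 - p)) := by
        rw [mul_left_comm, hb', mul_one]
    _ ≤ b ^ (p - 1) * (p * a + (1 - p) * b) := by gcongr
    _ = b ^ p + p * b ^ (p - 1) * (a - b) := by rw [← hbp]; ring

lemma sub_one_div_pos_of_one_lt {ψ : ℝ} (hψ : 1 < ψ) : 0 < 1 - 1 / ψ := by
  rw [sub_pos, div_lt_one (one_pos.trans hψ)]
  exact hψ

lemma isGreatest_mul_rpow_div_add_sub_mul {g : ℝ → ℝ} {K C ρ q c' : ℝ} (hK : 0 ≤ K)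
    (hρ0 : 0 < ρ) (hρ1 : ρ ≤ 1) (hc' : 0 < c') (hg : ∀ c, g c = K * c ^ ρ / ρ + C)
    (hq : q = K * c' ^ (ρ - 1)) :
    IsGreatest {y | ∃ c, 0 ≤ c ∧ y = g c - c * q} (g c' - c' * q) := by
  refine ⟨⟨c', hc'.le, rfl⟩, ?_⟩
  rintro _ ⟨c, hc, rfl⟩
  have tangent := rpow_le_rpow_add_mul_sub hc hc' hρ0.le hρ1
  have : K * c ^ ρ / ρ ≤ K * (c' ^ ρ + ρ * c' ^ (ρ - 1) * (c - c')) / ρ := by gcongr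
  rw [hg, hg, hq]
  field_simp at this ⊢
  linarith

lemma isGreatest_mul_add_mul_sq_div_two {g : ℝ → ℝ} {a b p₀ : ℝ} (ha : a < 0)
    (hg : ∀ p, g p = b * p + a * p ^ 2 / 2) (hp₀ : a * p₀ + b = 0) :
    IsGreatest {y | ∃ p, y = g p} (g p₀) := by
  refine ⟨⟨p₀, rfl⟩, ?_⟩
  rintro _ ⟨p, rfl⟩
  have : g p = g p₀ + a * (p - p₀) ^ 2 / 2 := by
    rw [hg, hg]; linear_combination (p - p₀) * hp₀
  nlinarith [sq_nonneg (p - p₀)]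

section PowerFunction

variable {w : ℝ → ℝ} {A p x : ℝ}

lemma deriv_of_eq_mul_rpow (hw : ∀ y, w y = A * y ^ p) (y : ℝ) :
    deriv w y = A * p * y ^ (p - 1) := by
  rw [show w = fun y ↦ A * y ^ p from funext hw, deriv_const_mul_field, Real.deriv_rpow_const,
    mul_assoc]

lemma mul_deriv_of_eq_mul_rpow (hw : ∀ y, w y = A * y ^ p) (hx : x ≠ 0) :
    x * deriv w x = p * w x := by
  rw [deriv_of_eq_mul_rpow hw, hw, rpow_sub_one hx]
  field_simp

lemma sq_mul_deriv_deriv_of_eq_mul_rpow (hw : ∀ y, w y = A * y ^ p) (hx : x ≠ 0) :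
    x ^ 2 * deriv (deriv w) x = p * (p - 1) * w x := by
  rw [deriv_of_eq_mul_rpow (deriv_of_eq_mul_rpow hw), hw, rpow_sub_one hx, rpow_sub_one hx]
  field_simp

end PowerFunction

section EpsteinZin

variable {f : ℝ → ℝ → ℝ} {δ ψ γ θ c₀ x v q : ℝ}

lemma rpow_mul_rpow_mul_rpow_neg_div (hδ : 0 < δ) (hc₀ : 0 < c₀) (hx : 0 < x) :
    δ ^ θ * x ^ (θ * (1 - 1 / ψ)) * c₀ ^ (-(θ / ψ)) = (δ * (x * c₀) ^ (1 - 1 / ψ) / c₀) ^ θ := by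
  rw [div_rpow (by positivity) hc₀.le, mul_rpow hδ.le (by positivity), ← rpow_mul (by positivity),
    mul_rpow hx.le hc₀.le, mul_div_assoc, mul_assoc,
    mul_div_assoc, ← rpow_sub hc₀]
  ring_nf

lemma mul_rpow_mul_rpow_one_sub_one_div (hδ : 0 < δ) (hθ : θ ≠ 0) (hc₀ : 0 < c₀) (hx : 0 < x)
    {ρ S : ℝ} (hS : S = (δ * (x * c₀) ^ ρ / c₀) ^ θ) :
    δ * (x * c₀) ^ ρ * S ^ (1 - 1 / θ) = c₀ * S := by
  have hu : 0 < δ * (x * c₀) ^ ρ / c₀ := by positivity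
  rw [hS, ← rpow_mul hu.le, mul_sub, mul_one, mul_one_div_cancel hθ, rpow_sub_one hu.ne']
  field_simp

lemma epsteinZin_apply_of_rpow_eq
    (hf : ∀ c v, f c v = δ * c ^ (1 - 1 / ψ) / (1 - 1 / ψ) * ((1 - γ) * v) ^ (1 - 1 / θ)
      - δ * θ * v)
    (hδ : 0 < δ) (hθ : θ ≠ 0) (hc₀ : 0 < c₀) (hx : 0 < x)
    (hv : (1 - γ) * v = (δ * (x * c₀) ^ (1 - 1 / ψ) / c₀) ^ θ) :
    f (x * c₀) v = c₀ * ((1 - γ) * v) / (1 - 1 / ψ) - δ * θ * v := by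
  rw [hf, ← mul_rpow_mul_rpow_one_sub_one_div hδ hθ hc₀ hx hv]
  ring

lemma isGreatest_epsteinZin_sub_mul
    (hf : ∀ c v, f c v = δ * c ^ (1 - 1 / ψ) / (1 - 1 / ψ) * ((1 - γ) * v) ^ (1 - 1 / θ)
      - δ * θ * v)
    (hδ : 0 < δ) (hψ : 1 < ψ) (hθ : θ ≠ 0) (hc₀ : 0 < c₀)
    (hx : 0 < x) (hv : (1 - γ) * v = (δ * (x * c₀) ^ (1 - 1 / ψ) / c₀) ^ θ)
    (hq : x * q = (1 - γ) * v) :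
    IsGreatest {y | ∃ c, 0 ≤ c ∧ y = f c v - c * q} (f (x * c₀) v - x * c₀ * q) := by
  have hρ1 : 1 - 1 / ψ ≤ 1 := sub_le_self _ (one_div_nonneg.2 (zero_le_one.trans hψ.le))
  refine isGreatest_mul_rpow_div_add_sub_mul (K := δ * ((1 - γ) * v) ^ (1 - 1 / θ))
    (C := -(δ * θ * v)) (by rw [hv]; positivity) (sub_one_div_pos_of_one_lt hψ) hρ1
    (by positivity) (fun c ↦ by rw [hf]; ring) ?_
  have foc := mul_rpow_mul_rpow_one_sub_one_div hδ hθ hc₀ hx hv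
  rw [rpow_sub_one (by positivity), mul_div_assoc', eq_div_iff (by positivity)]
  linear_combination c₀ * hq - foc

end EpsteinZin

theorem hjb_no_aging_no_healthcare_general
    (δ ψ γ ζ r μ σ m θ : ℝ)
    (hδ : 0 < δ) (hψ : 1 < ψ) (hγ0 : 0 < γ) (hγ : γ ≠ 1)
    (hσ : 0 < σ)
    (hθ : θ = (1 - γ) / (1 - 1 / ψ))
    (c₀ : ℝ)
    (hc₀ : c₀ = ψ * δ + (1 - ψ) * ((ζ ^ (1 - γ) - 1) * m / (1 - γ) + r + μ ^ 2 / (2 * γ * σ ^ 2)))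
    (hc₀pos : 0 < c₀)
    (f : ℝ → ℝ → ℝ)
    (hf : ∀ c v, f c v = δ * c ^ (1 - 1 / ψ) / (1 - 1 / ψ) * ((1 - γ) * v) ^ (1 - 1 / θ)
        - δ * θ * v)
    (w : ℝ → ℝ)
    (hw : ∀ x, w x = δ ^ θ * x ^ (1 - γ) / (1 - γ) * c₀ ^ (-(θ / ψ))) :
    ∀ x : ℝ, 0 < x →
      IsGreatest {y : ℝ | ∃ c : ℝ, 0 ≤ c ∧ y = f c (w x) - c * deriv w x}
        (f (x * c₀) (w x) - (x * c₀) * deriv w x) ∧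
      IsGreatest {y : ℝ | ∃ p : ℝ,
          y = μ * p * x * deriv w x + σ ^ 2 * p ^ 2 * x ^ 2 * deriv (deriv w) x / 2}
        (μ * (μ / (γ * σ ^ 2)) * x * deriv w x
          + σ ^ 2 * (μ / (γ * σ ^ 2)) ^ 2 * x ^ 2 * deriv (deriv w) x / 2) ∧
      (f (x * c₀) (w x) - (x * c₀) * deriv w x)
        + (μ * (μ / (γ * σ ^ 2)) * x * deriv w x
            + σ ^ 2 * (μ / (γ * σ ^ 2)) ^ 2 * x ^ 2 * deriv (deriv w) x / 2)
        + r * x * deriv w x + (ζ ^ (1 - γ) - 1) * m * w x = 0 := by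
  intro x hx
  have hρ0 := sub_one_div_pos_of_one_lt hψ
  have h1γ : 1 - γ ≠ 0 := sub_ne_zero.2 hγ.symm
  have hθ0 : θ ≠ 0 := hθ ▸ div_ne_zero h1γ hρ0.ne'
  have hθρ : θ * (1 - 1 / ψ) = 1 - γ := by rw [hθ, div_mul_cancel₀ _ hρ0.ne']
  have hS : (1 - γ) * w x = (δ * (x * c₀) ^ (1 - 1 / ψ) / c₀) ^ θ := by
    rw [← rpow_mul_rpow_mul_rpow_neg_div hδ hc₀pos hx, hθρ, hw]
    field_simp
  have hS0 : 0 < (1 - γ) * w x := hS ▸ by positivity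
  have hw' : ∀ y, w y = δ ^ θ * c₀ ^ (-(θ / ψ)) / (1 - γ) * y ^ (1 - γ) := fun y ↦ by
    rw [hw]; ring
  have hxw' := mul_deriv_of_eq_mul_rpow hw' hx.ne'
  have hxw'' := sq_mul_deriv_deriv_of_eq_mul_rpow hw' hx.ne'
  refine ⟨isGreatest_epsteinZin_sub_mul hf hδ hψ hθ0 hc₀pos hx hS hxw',
    isGreatest_mul_add_mul_sq_div_two (b := μ * (x * deriv w x))
      (a := σ ^ 2 * (x ^ 2 * deriv (deriv w) x)) ?_ (fun p ↦ by ring) ?_, ?_⟩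
  · rw [hxw'']
    nlinarith [mul_pos (mul_pos hγ0 (pow_pos hσ 2)) hS0]
  · rw [hxw'', hxw']
    field_simp
    ring
  · have hd1 : deriv w x = (1 - γ) * w x / x := by rw [← hxw']; field_simp
    have hd2 : deriv (deriv w) x = (1 - γ) * (1 - γ - 1) * w x / x ^ 2 := by
      rw [← hxw'']; field_simp
    rw [epsteinZin_apply_of_rpow_eq hf hδ hθ0 hc₀pos hx hS, hd1, hd2, hθ, hc₀]
    have : ψ - 1 ≠ 0 := sub_ne_zero.2 hψ.ne'
    field_simp
    ring

/-- The explicit function `w(x) = δ^θ x^{1-γ}/(1-γ) c̃₀(m)^{-θ/ψ}` solves the stationary HJB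
equation in the case of constant mortality `m` and no healthcare, with maximizers
`c̄(x) = x·c̃₀(m)` and `π̄ = μ/(γσ²)`. -/
theorem hjb_no_aging_no_healthcare
    (δ ψ γ ζ r μ σ m θ : ℝ)
    (hδ : 0 < δ) (hψ : 1 < ψ) (hγψ : 1 / ψ < γ) (hγ0 : 0 < γ) (hγ : γ ≠ 1)
    (hζ : ζ ∈ Set.Ioc (0 : ℝ) 1) (hσ : 0 < σ) (hm : 0 ≤ m)
    (hθ : θ = (1 - γ) / (1 - 1 / ψ))
    (c₀ : ℝ)
    (hc₀ : c₀ = ψ * δ + (1 - ψ) * ((ζ ^ (1 - γ) - 1) * m / (1 - γ) + r + μ ^ 2 / (2 * γ * σ ^ 2)))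
    (hc₀pos : 0 < c₀)
    (f : ℝ → ℝ → ℝ)
    (hf : ∀ c v, f c v = δ * c ^ (1 - 1 / ψ) / (1 - 1 / ψ) * ((1 - γ) * v) ^ (1 - 1 / θ)
        - δ * θ * v)
    (w : ℝ → ℝ)
    (hw : ∀ x, w x = δ ^ θ * x ^ (1 - γ) / (1 - γ) * c₀ ^ (-(θ / ψ))) :
    ∀ x : ℝ, 0 < x →
      IsGreatest {y : ℝ | ∃ c : ℝ, 0 ≤ c ∧ y = f c (w x) - c * deriv w x}
        (f (x * c₀) (w x) - (x * c₀) * deriv w x) ∧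
      IsGreatest {y : ℝ | ∃ p : ℝ,
          y = μ * p * x * deriv w x + σ ^ 2 * p ^ 2 * x ^ 2 * deriv (deriv w) x / 2}
        (μ * (μ / (γ * σ ^ 2)) * x * deriv w x
          + σ ^ 2 * (μ / (γ * σ ^ 2)) ^ 2 * x ^ 2 * deriv (deriv w) x / 2) ∧
      (f (x * c₀) (w x) - (x * c₀) * deriv w x)
        + (μ * (μ / (γ * σ ^ 2)) * x * deriv w x
            + σ ^ 2 * (μ / (γ * σ ^ 2)) ^ 2 * x ^ 2 * deriv (deriv w) x / 2)
        + r * x * deriv w x + (ζ ^ (1 - γ) - 1) * m * w x = 0 :=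
  hjb_no_aging_no_healthcare_general δ ψ γ ζ r μ σ m θ hδ hψ hγ0 hγ hσ hθ c₀ hc₀ hc₀pos f hf w hw
end

section
/- Fix q>0, k*>0, A>0 and define u_q(m) := ( (1/q)∫₀^∞ e^{-A·m·y/q}·(y+1)^{-(1+k*/q)} dy )^{-1}. Then for every m>0, k* + A·m < u_q(m) < k* + A·m + q. -/
open Real MeasureTheory Set Filter Topology

/-!
With `a = A m / q` and `b = k*/q`, the substitution gives `u_q(m) = q / I` where
`I = ∫₀^∞ e^{-a y} (1 + y)^{-(1+b)} dy`, so the claim is `1 < (a + b + 1) I` and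
`(a + b) I < 1`. The lower bound compares the integrand with `e^{-(a+b+1) y}`, using
`1 + y < e^y`. The upper bound compares it with `(a + b)⁻¹` times the derivative of
`-e^{-a y} (1 + y)^{-b}`, which is `e^{-a y} (a (1 + y) + b) (1 + y)^{-(1+b)}` and integrates
to `1`.
-/

theorem setIntegral_lt_setIntegral_of_forall_lt {α : Type*} [MeasurableSpace α] {μ : Measure α}
    {s : Set α} {f g : α → ℝ} (hs : MeasurableSet s) (hμs : μ s ≠ 0)
    (hf : IntegrableOn f s μ) (hg : IntegrableOn g s μ) (hlt : ∀ x ∈ s, f x < g x) :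
    ∫ x in s, f x ∂μ < ∫ x in s, g x ∂μ := by
  have hsupp : Function.support (fun x => g x - f x) ∩ s = s :=
    inter_eq_right.2 fun x hx => sub_ne_zero.2 (hlt x hx).ne'
  rw [← sub_pos, ← integral_sub hg hf,
    setIntegral_pos_iff_support_of_nonneg_ae (f := fun x => g x - f x) _ (hg.sub hf), hsupp]
  · exact pos_iff_ne_zero.2 hμs
  · exact (ae_restrict_iff' hs).2 (ae_of_all _ fun x hx => sub_nonneg.2 (hlt x hx).le)

theorem integral_exp_neg_mul_Ioi_zero {c : ℝ} (hc : 0 < c) :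
    ∫ y in Ioi 0, exp (-(c * y)) = c⁻¹ := by
  simpa [neg_mul, neg_div] using integral_exp_mul_Ioi (neg_neg_of_pos hc) 0

theorem exp_neg_mul_lt_add_one_rpow_neg {p y : ℝ} (hp : 0 < p) (hy : 0 < y) :
    exp (-(p * y)) < (y + 1) ^ (-p) := by
  have hy1 : 0 < y + 1 := by linarith
  rw [exp_neg, rpow_neg hy1.le, mul_comm, exp_mul]
  exact inv_strictAnti₀ (rpow_pos_of_pos hy1 p)
    (rpow_lt_rpow hy1.le (by linarith [add_one_lt_exp hy.ne']) hp)

theorem hasDerivAt_neg_exp_neg_mul_mul_rpow_neg (a b : ℝ) {y : ℝ} (hy : -1 < y) :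
    HasDerivAt (fun y => -(exp (-(a * y)) * (y + 1) ^ (-b)))
      (exp (-(a * y)) * (a * (y + 1) + b) * (y + 1) ^ (-(1 + b))) y := by
  have hy1 : 0 < y + 1 := by linarith
  have hexp : HasDerivAt (fun y => exp (-(a * y))) (exp (-(a * y)) * -a) y :=
    (((hasDerivAt_id y).const_mul a).neg).exp.congr_deriv (by simp)
  have hpow : HasDerivAt (fun y => (y + 1) ^ (-b)) (-b * (y + 1) ^ (-b - 1)) y := by
    simpa using ((hasDerivAt_id y).add_const 1).rpow_const (p := -b) (Or.inl hy1.ne')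
  refine (hexp.mul hpow).neg.congr_deriv ?_
  rw [show -b = 1 + -(1 + b) by ring, rpow_add hy1, rpow_one,
    show 1 + -(1 + b) - 1 = -(1 + b) by ring]
  ring

section ShiftedPowerLaplace

variable {a b : ℝ}

noncomputable def shiftedPowLaplace (a b : ℝ) : ℝ :=
  ∫ y in Ioi 0, exp (-(a * y)) * (y + 1) ^ (-(1 + b))

theorem integrableOn_exp_neg_mul_mul_rpow (ha : 0 < a) (hb : -1 ≤ b) :
    IntegrableOn (fun y => exp (-(a * y)) * (y + 1) ^ (-(1 + b))) (Ioi 0) := by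
  refine (integrableOn_exp_mul_Ioi (neg_neg_of_pos ha) 0).mono'
    (by fun_prop : Measurable _).aestronglyMeasurable
    ((ae_restrict_iff' measurableSet_Ioi).2 (ae_of_all _ fun y (hy : 0 < y) => ?_))
  have hpow : (y + 1) ^ (-(1 + b)) ≤ 1 :=
    rpow_le_one_of_one_le_of_nonpos (by linarith) (by linarith)
  rw [norm_mul, norm_of_nonneg (exp_pos _).le, norm_of_nonneg (by positivity), neg_mul]
  exact mul_le_of_le_one_right (exp_pos _).le hpow

theorem one_lt_mul_shiftedPowLaplace (ha : 0 < a) (hb : -1 < b) :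
    1 < (a + b + 1) * shiftedPowLaplace a b := by
  have hc : 0 < a + b + 1 := by linarith
  rw [← inv_lt_iff_one_lt_mul₀' hc, ← integral_exp_neg_mul_Ioi_zero hc]
  refine setIntegral_lt_setIntegral_of_forall_lt measurableSet_Ioi (by simp)
    ((integrableOn_exp_mul_Ioi (neg_neg_of_pos hc) 0).congr_fun
      (fun y _ => by simp only [neg_mul]) measurableSet_Ioi)
    (integrableOn_exp_neg_mul_mul_rpow ha hb.le) fun y (hy : 0 < y) => ?_
  rw [show -((a + b + 1) * y) = -(a * y) + -((1 + b) * y) by ring, exp_add]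
  exact mul_lt_mul_of_pos_left (exp_neg_mul_lt_add_one_rpow_neg (by linarith) hy) (exp_pos _)

theorem tendsto_neg_exp_neg_mul_mul_rpow_neg (ha : 0 < a) (hb : 0 < b) :
    Tendsto (fun y => -(exp (-(a * y)) * (y + 1) ^ (-b))) atTop (𝓝 0) := by
  have hexp : Tendsto (fun y => exp (-(a * y))) atTop (𝓝 0) :=
    tendsto_exp_atBot.comp (tendsto_neg_atTop_atBot.comp (tendsto_id.const_mul_atTop ha))
  have hpow : Tendsto (fun y : ℝ => (y + 1) ^ (-b)) atTop (𝓝 0) :=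
    (tendsto_rpow_neg_atTop hb).comp (tendsto_atTop_add_const_right _ 1 tendsto_id)
  simpa using (hexp.mul hpow).neg

theorem integrableOn_and_integral_neg_exp_neg_mul_mul_rpow_neg_deriv (ha : 0 < a) (hb : 0 < b) :
    IntegrableOn (fun y => exp (-(a * y)) * (a * (y + 1) + b) * (y + 1) ^ (-(1 + b))) (Ioi 0) ∧
      ∫ y in Ioi 0, exp (-(a * y)) * (a * (y + 1) + b) * (y + 1) ^ (-(1 + b)) = 1 := by
  have hderiv : ∀ y ∈ Ici (0 : ℝ), HasDerivAt (fun y => -(exp (-(a * y)) * (y + 1) ^ (-b)))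
      (exp (-(a * y)) * (a * (y + 1) + b) * (y + 1) ^ (-(1 + b))) y :=
    fun y (hy : 0 ≤ y) => hasDerivAt_neg_exp_neg_mul_mul_rpow_neg a b (by linarith)
  have hnonneg : ∀ y ∈ Ioi (0 : ℝ),
      0 ≤ exp (-(a * y)) * (a * (y + 1) + b) * (y + 1) ^ (-(1 + b)) := fun y (hy : 0 < y) => by
    positivity
  have htendsto := tendsto_neg_exp_neg_mul_mul_rpow_neg ha hb
  refine ⟨integrableOn_Ioi_deriv_of_nonneg' hderiv hnonneg htendsto, ?_⟩
  rw [integral_Ioi_of_hasDerivAt_of_nonneg' hderiv hnonneg htendsto]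
  simp

theorem mul_shiftedPowLaplace_lt_one (ha : 0 < a) (hb : 0 < b) :
    (a + b) * shiftedPowLaplace a b < 1 := by
  obtain ⟨hint, hone⟩ := integrableOn_and_integral_neg_exp_neg_mul_mul_rpow_neg_deriv ha hb
  have hlt : ∀ y ∈ Ioi (0 : ℝ), (a + b) * (exp (-(a * y)) * (y + 1) ^ (-(1 + b))) <
      exp (-(a * y)) * (a * (y + 1) + b) * (y + 1) ^ (-(1 + b)) := fun y (hy : 0 < y) => by
    have hpos : 0 < exp (-(a * y)) * (y + 1) ^ (-(1 + b)) := by positivity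
    nlinarith [mul_pos (mul_pos ha hy) hpos]
  calc (a + b) * shiftedPowLaplace a b
      = ∫ y in Ioi 0, (a + b) * (exp (-(a * y)) * (y + 1) ^ (-(1 + b))) :=
        (integral_const_mul _ _).symm
    _ < ∫ y in Ioi 0, exp (-(a * y)) * (a * (y + 1) + b) * (y + 1) ^ (-(1 + b)) :=
        setIntegral_lt_setIntegral_of_forall_lt measurableSet_Ioi (by simp)
          ((integrableOn_exp_neg_mul_mul_rpow ha (by linarith)).const_mul _) hint hlt
    _ = 1 := hone

end ShiftedPowerLaplace

/-- The bounds (ANHbound): `k* + A·m < u_q(m) < k* + A·m + q` for all `m > 0`. -/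
theorem anh_ode_bounds
    (q kstar A : ℝ) (hq : 0 < q) (hk : 0 < kstar) (hA : 0 < A)
    (u : ℝ → ℝ)
    (hu : ∀ m : ℝ, u m = (1 / q * ∫ y in Set.Ioi (0 : ℝ),
        Real.exp (-(A * m * y) / q) * (y + 1) ^ (-(1 + kstar / q)))⁻¹) :
    ∀ m : ℝ, 0 < m → kstar + A * m < u m ∧ u m < kstar + A * m + q := by
  intro m hm
  have ha : 0 < A * m / q := by positivity
  have hb : 0 < kstar / q := by positivity
  have hum : u m = q / shiftedPowLaplace (A * m / q) (kstar / q) := by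
    rw [hu m, shiftedPowLaplace, one_div_mul_eq_div, inv_div]
    congr 2 with y
    rw [neg_div, mul_div_right_comm]
  have hlower := one_lt_mul_shiftedPowLaplace ha (by linarith : -1 < kstar / q)
  have hupper := mul_shiftedPowLaplace_lt_one ha hb
  set I := shiftedPowLaplace (A * m / q) (kstar / q)
  have hI : 0 < I := pos_of_mul_pos_right (one_pos.trans hlower) (by positivity)
  rw [show A * m / q + kstar / q + 1 = (kstar + A * m + q) / q by field_simp; ring,
    div_mul_eq_mul_div, one_lt_div hq] at hlower
  rw [show A * m / q + kstar / q = (kstar + A * m) / q by ring,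
    div_mul_eq_mul_div, div_lt_one hq] at hupper
  rw [hum, lt_div_iff₀ hI, div_lt_iff₀ hI]
  exact ⟨hupper, hlower⟩
end
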